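/- Expression Action Determinism (for subsumption-minimal derivations): (1) If Γ ⊢ ê◇ ⇒ τ and there are subsumption-minimal derivations D₁ of Γ ⊢ ê ⇒ τ --α--> ê' ⇒ τ' and D₂ of Γ ⊢ ê ⇒ τ --α--> ê'' ⇒ τ'', then ê' = ê'' and τ' = τ''. (2) If Γ ⊢ ê◇ ⇐ τ and there are subsumption-minimal derivations D₁ of Γ ⊢ ê --α--> ê' ⇐ τ and D₂ of Γ ⊢ ê --α--> ê'' ⇐ τ, then ê' = ê''. -/
import Mathlib


/-! Hazelnut: H-types, H-expressions, bidirectional statics,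
    Z-types, Z-expressions, and the bidirectional action semantics. -/

inductive HTyp : Type
  | num : HTyp
  | arr : HTyp → HTyp → HTyp
  | hole : HTyp
  deriving DecidableEq

inductive HExp : Type
  | var : String → HExp
  | lam : String → HExp → HExp
  | ap : HExp → HExp → HExp
  | lit : Nat → HExp
  | plus : HExp → HExp → HExp
  | asc : HExp → HTyp → HExp
  | hole : HExp
  | nehole : HExp → HExp
  deriving DecidableEq

/-- Typing contexts map variables to hypothesized H-types. -/
def Ctx : Type := String → Option HTyp

/-- Context extension Γ, x : τ. -/
def Ctx.extend (Γ : Ctx) (x : String) (τ : HTyp) : Ctx :=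
  fun y => if y = x then some τ else Γ y

/-- Type consistency τ ~ τ'. -/
inductive Consistent : HTyp → HTyp → Prop
  | holeR (τ : HTyp) : Consistent τ .hole
  | holeL (τ : HTyp) : Consistent .hole τ
  | refl (τ : HTyp) : Consistent τ τ
  | arr {τ₁ τ₂ τ₁' τ₂' : HTyp} :
      Consistent τ₁ τ₁' → Consistent τ₂ τ₂' →
      Consistent (.arr τ₁ τ₂) (.arr τ₁' τ₂')

/-- Type inconsistency τ ≁ τ'. -/
inductive Inconsistent : HTyp → HTyp → Prop
  | numArr (τ₁ τ₂ : HTyp) : Inconsistent .num (.arr τ₁ τ₂)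
  | arrNum (τ₁ τ₂ : HTyp) : Inconsistent (.arr τ₁ τ₂) .num
  | arr1 {τ₁ τ₂ τ₃ τ₄ : HTyp} :
      Inconsistent τ₁ τ₃ → Inconsistent (.arr τ₁ τ₂) (.arr τ₃ τ₄)
  | arr2 {τ₁ τ₂ τ₃ τ₄ : HTyp} :
      Inconsistent τ₂ τ₄ → Inconsistent (.arr τ₁ τ₂) (.arr τ₃ τ₄)

/-- Matched arrow type: τ ▸ τ₁ → τ₂. -/
inductive MArr : HTyp → HTyp → HTyp → Prop
  | hole : MArr .hole .hole .hole
  | arr (τ₁ τ₂ : HTyp) : MArr (.arr τ₁ τ₂) τ₁ τ₂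

mutual
  /-- Type synthesis: Γ ⊢ e ⇒ τ. -/
  inductive Syn : Ctx → HExp → HTyp → Prop
    | var {Γ : Ctx} {x : String} {τ : HTyp} :
        Γ x = some τ → Syn Γ (.var x) τ
    | asc {Γ : Ctx} {e : HExp} {τ : HTyp} :
        Ana Γ e τ → Syn Γ (.asc e τ) τ
    | ap {Γ : Ctx} {e₁ e₂ : HExp} {τ₁ τ₂ τ : HTyp} :
        Syn Γ e₁ τ₁ → MArr τ₁ τ₂ τ → Ana Γ e₂ τ₂ → Syn Γ (.ap e₁ e₂) τ
    | lit {Γ : Ctx} (n : Nat) : Syn Γ (.lit n) .num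
    | plus {Γ : Ctx} {e₁ e₂ : HExp} :
        Ana Γ e₁ .num → Ana Γ e₂ .num → Syn Γ (.plus e₁ e₂) .num
    | hole {Γ : Ctx} : Syn Γ .hole .hole
    | nehole {Γ : Ctx} {e : HExp} {τ : HTyp} :
        Syn Γ e τ → Syn Γ (.nehole e) .hole

  /-- Type analysis: Γ ⊢ e ⇐ τ. -/
  inductive Ana : Ctx → HExp → HTyp → Prop
    | lam {Γ : Ctx} {x : String} {e : HExp} {τ τ₁ τ₂ : HTyp} :
        MArr τ τ₁ τ₂ → Ana (Γ.extend x τ₁) e τ₂ → Ana Γ (.lam x e) τ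
    | subsume {Γ : Ctx} {e : HExp} {τ τ' : HTyp} :
        Syn Γ e τ' → Consistent τ τ' → Ana Γ e τ
end

/-- Z-types: H-types with a cursor. -/
inductive ZTyp : Type
  | cursor : HTyp → ZTyp
  | arrL : ZTyp → HTyp → ZTyp
  | arrR : HTyp → ZTyp → ZTyp
  deriving DecidableEq

/-- Z-expressions: H-expressions with a cursor. -/
inductive ZExp : Type
  | cursor : HExp → ZExp
  | lam : String → ZExp → ZExp
  | apL : ZExp → HExp → ZExp
  | apR : HExp → ZExp → ZExp
  | plusL : ZExp → HExp → ZExp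
  | plusR : HExp → ZExp → ZExp
  | ascL : ZExp → HTyp → ZExp
  | ascR : HExp → ZTyp → ZExp
  | nehole : ZExp → ZExp
  deriving DecidableEq

/-- Cursor erasure for Z-types: τ̂◇. -/
def ZTyp.erase : ZTyp → HTyp
  | .cursor τ => τ
  | .arrL zt τ => .arr zt.erase τ
  | .arrR τ zt => .arr τ zt.erase

/-- Cursor erasure for Z-expressions: ê◇. -/
def ZExp.erase : ZExp → HExp
  | .cursor e => e
  | .lam x ze => .lam x ze.erase
  | .apL ze e => .ap ze.erase e
  | .apR e ze => .ap e ze.erase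
  | .plusL ze e => .plus ze.erase e
  | .plusR e ze => .plus e ze.erase
  | .ascL ze τ => .asc ze.erase τ
  | .ascR e zt => .asc e zt.erase
  | .nehole ze => .nehole ze.erase

inductive Dir : Type
  | child : Nat → Dir
  | parent : Dir
  deriving DecidableEq

inductive Shape : Type
  | arrow : Shape
  | num : Shape
  | asc : Shape
  | var : String → Shape
  | lam : String → Shape
  | ap : Shape
  | lit : Nat → Shape
  | plus : Shape
  | nehole : Shape
  deriving DecidableEq

inductive HAction : Type
  | move : Dir → HAction
  | construct : Shape → HAction
  | del : HAction
  | finish : HAction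
  deriving DecidableEq

/-- Type actions: τ̂ --α--> τ̂'. -/
inductive TAct : ZTyp → HAction → ZTyp → Prop
  | arrChild1 {τ₁ τ₂ : HTyp} :
      TAct (.cursor (.arr τ₁ τ₂)) (.move (.child 1)) (.arrL (.cursor τ₁) τ₂)
  | arrChild2 {τ₁ τ₂ : HTyp} :
      TAct (.cursor (.arr τ₁ τ₂)) (.move (.child 2)) (.arrR τ₁ (.cursor τ₂))
  | arrParent1 {τ₁ τ₂ : HTyp} :
      TAct (.arrL (.cursor τ₁) τ₂) (.move .parent) (.cursor (.arr τ₁ τ₂))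
  | arrParent2 {τ₁ τ₂ : HTyp} :
      TAct (.arrR τ₁ (.cursor τ₂)) (.move .parent) (.cursor (.arr τ₁ τ₂))
  | del {τ : HTyp} : TAct (.cursor τ) .del (.cursor .hole)
  | conArrow {τ : HTyp} :
      TAct (.cursor τ) (.construct .arrow) (.arrR τ (.cursor .hole))
  | conNum : TAct (.cursor .hole) (.construct .num) (.cursor .num)
  | zip1 {zt zt' : ZTyp} {α : HAction} {τ : HTyp} :
      TAct zt α zt' → TAct (.arrL zt τ) α (.arrL zt' τ)
  | zip2 {zt zt' : ZTyp} {α : HAction} {τ : HTyp} :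
      TAct zt α zt' → TAct (.arrR τ zt) α (.arrR τ zt')

/-- Expression movement: ê --move δ--> ê'. -/
inductive EMove : ZExp → Dir → ZExp → Prop
  | ascChild1 {e : HExp} {τ : HTyp} :
      EMove (.cursor (.asc e τ)) (.child 1) (.ascL (.cursor e) τ)
  | ascChild2 {e : HExp} {τ : HTyp} :
      EMove (.cursor (.asc e τ)) (.child 2) (.ascR e (.cursor τ))
  | ascParent1 {e : HExp} {τ : HTyp} :
      EMove (.ascL (.cursor e) τ) .parent (.cursor (.asc e τ))
  | ascParent2 {e : HExp} {τ : HTyp} :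
      EMove (.ascR e (.cursor τ)) .parent (.cursor (.asc e τ))
  | lamChild1 {x : String} {e : HExp} :
      EMove (.cursor (.lam x e)) (.child 1) (.lam x (.cursor e))
  | lamParent {x : String} {e : HExp} :
      EMove (.lam x (.cursor e)) .parent (.cursor (.lam x e))
  | plusChild1 {e₁ e₂ : HExp} :
      EMove (.cursor (.plus e₁ e₂)) (.child 1) (.plusL (.cursor e₁) e₂)
  | plusChild2 {e₁ e₂ : HExp} :
      EMove (.cursor (.plus e₁ e₂)) (.child 2) (.plusR e₁ (.cursor e₂))
  | plusParent1 {e₁ e₂ : HExp} :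
      EMove (.plusL (.cursor e₁) e₂) .parent (.cursor (.plus e₁ e₂))
  | plusParent2 {e₁ e₂ : HExp} :
      EMove (.plusR e₁ (.cursor e₂)) .parent (.cursor (.plus e₁ e₂))
  | apChild1 {e₁ e₂ : HExp} :
      EMove (.cursor (.ap e₁ e₂)) (.child 1) (.apL (.cursor e₁) e₂)
  | apChild2 {e₁ e₂ : HExp} :
      EMove (.cursor (.ap e₁ e₂)) (.child 2) (.apR e₁ (.cursor e₂))
  | apParent1 {e₁ e₂ : HExp} :
      EMove (.apL (.cursor e₁) e₂) .parent (.cursor (.ap e₁ e₂))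
  | apParent2 {e₁ e₂ : HExp} :
      EMove (.apR e₁ (.cursor e₂)) .parent (.cursor (.ap e₁ e₂))
  | neholeChild1 {e : HExp} :
      EMove (.cursor (.nehole e)) (.child 1) (.nehole (.cursor e))
  | neholeParent {e : HExp} :
      EMove (.nehole (.cursor e)) .parent (.cursor (.nehole e))
  | ascZip1 {ze ze' : ZExp} {δ : Dir} {τ : HTyp} :
      EMove ze δ ze' → EMove (.ascL ze τ) δ (.ascL ze' τ)
  | ascZip2 {zt zt' : ZTyp} {δ : Dir} {e : HExp} :
      TAct zt (.move δ) zt' → EMove (.ascR e zt) δ (.ascR e zt')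
  | lamZip {x : String} {ze ze' : ZExp} {δ : Dir} :
      EMove ze δ ze' → EMove (.lam x ze) δ (.lam x ze')
  | apZip1 {ze ze' : ZExp} {δ : Dir} {e : HExp} :
      EMove ze δ ze' → EMove (.apL ze e) δ (.apL ze' e)
  | apZip2 {ze ze' : ZExp} {δ : Dir} {e : HExp} :
      EMove ze δ ze' → EMove (.apR e ze) δ (.apR e ze')
  | plusZip1 {ze ze' : ZExp} {δ : Dir} {e : HExp} :
      EMove ze δ ze' → EMove (.plusL ze e) δ (.plusL ze' e)
  | plusZip2 {ze ze' : ZExp} {δ : Dir} {e : HExp} :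
      EMove ze δ ze' → EMove (.plusR e ze) δ (.plusR e ze')
  | neholeZip {ze ze' : ZExp} {δ : Dir} :
      EMove ze δ ze' → EMove (.nehole ze) δ (.nehole ze')

mutual
  /-- Synthetic action judgement: Γ ⊢ ê ⇒ τ --α--> ê' ⇒ τ'. -/
  inductive SynAct : Ctx → ZExp → HTyp → HAction → ZExp → HTyp → Prop
    | move {Γ : Ctx} {ze ze' : ZExp} {τ : HTyp} {δ : Dir} :
        EMove ze δ ze' → SynAct Γ ze τ (.move δ) ze' τ
    | del {Γ : Ctx} {e : HExp} {τ : HTyp} :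
        SynAct Γ (.cursor e) τ .del (.cursor .hole) .hole
    | conAsc {Γ : Ctx} {e : HExp} {τ : HTyp} :
        SynAct Γ (.cursor e) τ (.construct .asc) (.ascR e (.cursor τ)) τ
    | conVar {Γ : Ctx} {x : String} {τ : HTyp} :
        Γ x = some τ →
        SynAct Γ (.cursor .hole) .hole (.construct (.var x)) (.cursor (.var x)) τ
    | conLam {Γ : Ctx} {x : String} :
        SynAct Γ (.cursor .hole) .hole (.construct (.lam x))
          (.ascR (.lam x .hole) (.arrL (.cursor .hole) .hole)) (.arr .hole .hole)
    | conApArr {Γ : Ctx} {e : HExp} {τ τ₁ τ₂ : HTyp} :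
        MArr τ τ₁ τ₂ →
        SynAct Γ (.cursor e) τ (.construct .ap) (.apR e (.cursor .hole)) τ₂
    | conApOtw {Γ : Ctx} {e : HExp} {τ : HTyp} :
        Inconsistent τ (.arr .hole .hole) →
        SynAct Γ (.cursor e) τ (.construct .ap)
          (.apR (.nehole e) (.cursor .hole)) .hole
    | conLit {Γ : Ctx} {n : Nat} :
        SynAct Γ (.cursor .hole) .hole (.construct (.lit n)) (.cursor (.lit n)) .num
    | conPlus1 {Γ : Ctx} {e : HExp} {τ : HTyp} :
        Consistent τ .num →
        SynAct Γ (.cursor e) τ (.construct .plus) (.plusR e (.cursor .hole)) .num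
    | conPlus2 {Γ : Ctx} {e : HExp} {τ : HTyp} :
        Inconsistent τ .num →
        SynAct Γ (.cursor e) τ (.construct .plus)
          (.plusR (.nehole e) (.cursor .hole)) .num
    | conNEHole {Γ : Ctx} {e : HExp} {τ : HTyp} :
        SynAct Γ (.cursor e) τ (.construct .nehole) (.nehole (.cursor e)) .hole
    | finish {Γ : Ctx} {e : HExp} {τ' : HTyp} :
        Syn Γ e τ' →
        SynAct Γ (.cursor (.nehole e)) .hole .finish (.cursor e) τ'
    | zipAsc1 {Γ : Ctx} {ze ze' : ZExp} {τ : HTyp} {α : HAction} :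
        AnaAct Γ ze τ α ze' →
        SynAct Γ (.ascL ze τ) τ α (.ascL ze' τ) τ
    | zipAsc2 {Γ : Ctx} {e : HExp} {zt zt' : ZTyp} {α : HAction} :
        TAct zt α zt' → Ana Γ e zt'.erase →
        SynAct Γ (.ascR e zt) zt.erase α (.ascR e zt') zt'.erase
    | zipApArr {Γ : Ctx} {ze ze' : ZExp} {e : HExp} {τ₁ τ₂ τ₃ τ₄ τ₅ : HTyp} {α : HAction} :
        Syn Γ ze.erase τ₂ → SynAct Γ ze τ₂ α ze' τ₃ →
        MArr τ₃ τ₄ τ₅ → Ana Γ e τ₄ →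
        SynAct Γ (.apL ze e) τ₁ α (.apL ze' e) τ₅
    | zipApAna {Γ : Ctx} {ze ze' : ZExp} {e : HExp} {τ₁ τ₂ τ₃ τ₄ : HTyp} {α : HAction} :
        Syn Γ e τ₂ → MArr τ₂ τ₃ τ₄ → AnaAct Γ ze τ₃ α ze' →
        SynAct Γ (.apR e ze) τ₁ α (.apR e ze') τ₄
    | zipPlus1 {Γ : Ctx} {ze ze' : ZExp} {e : HExp} {α : HAction} :
        AnaAct Γ ze .num α ze' →
        SynAct Γ (.plusL ze e) .num α (.plusL ze' e) .num
    | zipPlus2 {Γ : Ctx} {ze ze' : ZExp} {e : HExp} {α : HAction} :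
        AnaAct Γ ze .num α ze' →
        SynAct Γ (.plusR e ze) .num α (.plusR e ze') .num
    | zipHole {Γ : Ctx} {ze ze' : ZExp} {τ τ' : HTyp} {α : HAction} :
        Syn Γ ze.erase τ → SynAct Γ ze τ α ze' τ' →
        SynAct Γ (.nehole ze) .hole α (.nehole ze') .hole

  /-- Analytic action judgement: Γ ⊢ ê --α--> ê' ⇐ τ. -/
  inductive AnaAct : Ctx → ZExp → HTyp → HAction → ZExp → Prop
    | subsume {Γ : Ctx} {ze ze' : ZExp} {τ τ' τ'' : HTyp} {α : HAction} :
        Syn Γ ze.erase τ' → SynAct Γ ze τ' α ze' τ'' → Consistent τ τ'' →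
        AnaAct Γ ze τ α ze'
    | move {Γ : Ctx} {ze ze' : ZExp} {τ : HTyp} {δ : Dir} :
        EMove ze δ ze' → AnaAct Γ ze τ (.move δ) ze'
    | del {Γ : Ctx} {e : HExp} {τ : HTyp} :
        AnaAct Γ (.cursor e) τ .del (.cursor .hole)
    | conAsc {Γ : Ctx} {e : HExp} {τ : HTyp} :
        AnaAct Γ (.cursor e) τ (.construct .asc) (.ascR e (.cursor τ))
    | conVar {Γ : Ctx} {x : String} {τ τ' : HTyp} :
        Γ x = some τ' → Inconsistent τ τ' →
        AnaAct Γ (.cursor .hole) τ (.construct (.var x)) (.nehole (.cursor (.var x)))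
    | conLam1 {Γ : Ctx} {x : String} {τ τ₁ τ₂ : HTyp} :
        MArr τ τ₁ τ₂ →
        AnaAct Γ (.cursor .hole) τ (.construct (.lam x)) (.lam x (.cursor .hole))
    | conLam2 {Γ : Ctx} {x : String} {τ : HTyp} :
        Inconsistent τ (.arr .hole .hole) →
        AnaAct Γ (.cursor .hole) τ (.construct (.lam x))
          (.nehole (.ascR (.lam x .hole) (.arrL (.cursor .hole) .hole)))
    | conLit {Γ : Ctx} {n : Nat} {τ : HTyp} :
        Inconsistent τ .num →
        AnaAct Γ (.cursor .hole) τ (.construct (.lit n)) (.nehole (.cursor (.lit n)))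
    | finish {Γ : Ctx} {e : HExp} {τ : HTyp} :
        Ana Γ e τ →
        AnaAct Γ (.cursor (.nehole e)) τ .finish (.cursor e)
    | zipLam {Γ : Ctx} {x : String} {ze ze' : ZExp} {τ τ₁ τ₂ : HTyp} {α : HAction} :
        MArr τ τ₁ τ₂ → AnaAct (Γ.extend x τ₁) ze τ₂ α ze' →
        AnaAct Γ (.lam x ze) τ α (.lam x ze')
end

/-- Iterated type action judgement. -/
inductive TActI : ZTyp → List HAction → ZTyp → Prop
  | refl {zt : ZTyp} : TActI zt [] zt
  | cons {zt zt' zt'' : ZTyp} {α : HAction} {αs : List HAction} :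
      TAct zt α zt' → TActI zt' αs zt'' → TActI zt (α :: αs) zt''

/-- Iterated synthetic action judgement. -/
inductive SynActI : Ctx → ZExp → HTyp → List HAction → ZExp → HTyp → Prop
  | refl {Γ : Ctx} {ze : ZExp} {τ : HTyp} : SynActI Γ ze τ [] ze τ
  | cons {Γ : Ctx} {ze ze' ze'' : ZExp} {τ τ' τ'' : HTyp} {α : HAction} {αs : List HAction} :
      SynAct Γ ze τ α ze' τ' → SynActI Γ ze' τ' αs ze'' τ'' →
      SynActI Γ ze τ (α :: αs) ze'' τ''

/-- Iterated analytic action judgement. -/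
inductive AnaActI : Ctx → ZExp → HTyp → List HAction → ZExp → Prop
  | refl {Γ : Ctx} {ze : ZExp} {τ : HTyp} : AnaActI Γ ze τ [] ze
  | cons {Γ : Ctx} {ze ze' ze'' : ZExp} {τ : HTyp} {α : HAction} {αs : List HAction} :
      AnaAct Γ ze τ α ze' → AnaActI Γ ze' τ αs ze'' →
      AnaActI Γ ze τ (α :: αs) ze''

/-- Every action in the list is a movement action. -/
inductive Movements : List HAction → Prop
  | nil : Movements []
  | cons {δ : Dir} {αs : List HAction} :
      Movements αs → Movements (.move δ :: αs)

/-- Conclusions derivable by an analytic action rule other than subsumption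
(with the ordinary judgements as premises). Used to state subsumption-minimality:
a use of the subsumption rule is premature exactly when some `AnaActNonSub`
conclusion exists for the same context, Z-expression, action and type. -/
inductive AnaActNonSub : Ctx → ZExp → HTyp → HAction → ZExp → Prop
  | move {Γ : Ctx} {ze ze' : ZExp} {τ : HTyp} {δ : Dir} :
      EMove ze δ ze' → AnaActNonSub Γ ze τ (.move δ) ze'
  | del {Γ : Ctx} {e : HExp} {τ : HTyp} :
      AnaActNonSub Γ (.cursor e) τ .del (.cursor .hole)
  | conAsc {Γ : Ctx} {e : HExp} {τ : HTyp} :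
      AnaActNonSub Γ (.cursor e) τ (.construct .asc) (.ascR e (.cursor τ))
  | conVar {Γ : Ctx} {x : String} {τ τ' : HTyp} :
      Γ x = some τ' → Inconsistent τ τ' →
      AnaActNonSub Γ (.cursor .hole) τ (.construct (.var x)) (.nehole (.cursor (.var x)))
  | conLam1 {Γ : Ctx} {x : String} {τ τ₁ τ₂ : HTyp} :
      MArr τ τ₁ τ₂ →
      AnaActNonSub Γ (.cursor .hole) τ (.construct (.lam x)) (.lam x (.cursor .hole))
  | conLam2 {Γ : Ctx} {x : String} {τ : HTyp} :
      Inconsistent τ (.arr .hole .hole) →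
      AnaActNonSub Γ (.cursor .hole) τ (.construct (.lam x))
        (.nehole (.ascR (.lam x .hole) (.arrL (.cursor .hole) .hole)))
  | conLit {Γ : Ctx} {n : Nat} {τ : HTyp} :
      Inconsistent τ .num →
      AnaActNonSub Γ (.cursor .hole) τ (.construct (.lit n)) (.nehole (.cursor (.lit n)))
  | finish {Γ : Ctx} {e : HExp} {τ : HTyp} :
      Ana Γ e τ →
      AnaActNonSub Γ (.cursor (.nehole e)) τ .finish (.cursor e)
  | zipLam {Γ : Ctx} {x : String} {ze ze' : ZExp} {τ τ₁ τ₂ : HTyp} {α : HAction} :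
      MArr τ τ₁ τ₂ → AnaAct (Γ.extend x τ₁) ze τ₂ α ze' →
      AnaActNonSub Γ (.lam x ze) τ α (.lam x ze')

mutual
  /-- Subsumption-minimal derivations of the synthetic action judgement:
  all analytic subderivations are subsumption-minimal. -/
  inductive SynActMin : Ctx → ZExp → HTyp → HAction → ZExp → HTyp → Prop
    | move {Γ : Ctx} {ze ze' : ZExp} {τ : HTyp} {δ : Dir} :
        EMove ze δ ze' → SynActMin Γ ze τ (.move δ) ze' τ
    | del {Γ : Ctx} {e : HExp} {τ : HTyp} :
        SynActMin Γ (.cursor e) τ .del (.cursor .hole) .hole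
    | conAsc {Γ : Ctx} {e : HExp} {τ : HTyp} :
        SynActMin Γ (.cursor e) τ (.construct .asc) (.ascR e (.cursor τ)) τ
    | conVar {Γ : Ctx} {x : String} {τ : HTyp} :
        Γ x = some τ →
        SynActMin Γ (.cursor .hole) .hole (.construct (.var x)) (.cursor (.var x)) τ
    | conLam {Γ : Ctx} {x : String} :
        SynActMin Γ (.cursor .hole) .hole (.construct (.lam x))
          (.ascR (.lam x .hole) (.arrL (.cursor .hole) .hole)) (.arr .hole .hole)
    | conApArr {Γ : Ctx} {e : HExp} {τ τ₁ τ₂ : HTyp} :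
        MArr τ τ₁ τ₂ →
        SynActMin Γ (.cursor e) τ (.construct .ap) (.apR e (.cursor .hole)) τ₂
    | conApOtw {Γ : Ctx} {e : HExp} {τ : HTyp} :
        Inconsistent τ (.arr .hole .hole) →
        SynActMin Γ (.cursor e) τ (.construct .ap)
          (.apR (.nehole e) (.cursor .hole)) .hole
    | conLit {Γ : Ctx} {n : Nat} :
        SynActMin Γ (.cursor .hole) .hole (.construct (.lit n)) (.cursor (.lit n)) .num
    | conPlus1 {Γ : Ctx} {e : HExp} {τ : HTyp} :
        Consistent τ .num →
        SynActMin Γ (.cursor e) τ (.construct .plus) (.plusR e (.cursor .hole)) .num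
    | conPlus2 {Γ : Ctx} {e : HExp} {τ : HTyp} :
        Inconsistent τ .num →
        SynActMin Γ (.cursor e) τ (.construct .plus)
          (.plusR (.nehole e) (.cursor .hole)) .num
    | conNEHole {Γ : Ctx} {e : HExp} {τ : HTyp} :
        SynActMin Γ (.cursor e) τ (.construct .nehole) (.nehole (.cursor e)) .hole
    | finish {Γ : Ctx} {e : HExp} {τ' : HTyp} :
        Syn Γ e τ' →
        SynActMin Γ (.cursor (.nehole e)) .hole .finish (.cursor e) τ'
    | zipAsc1 {Γ : Ctx} {ze ze' : ZExp} {τ : HTyp} {α : HAction} :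
        AnaActMin Γ ze τ α ze' →
        SynActMin Γ (.ascL ze τ) τ α (.ascL ze' τ) τ
    | zipAsc2 {Γ : Ctx} {e : HExp} {zt zt' : ZTyp} {α : HAction} :
        TAct zt α zt' → Ana Γ e zt'.erase →
        SynActMin Γ (.ascR e zt) zt.erase α (.ascR e zt') zt'.erase
    | zipApArr {Γ : Ctx} {ze ze' : ZExp} {e : HExp} {τ₁ τ₂ τ₃ τ₄ τ₅ : HTyp} {α : HAction} :
        Syn Γ ze.erase τ₂ → SynActMin Γ ze τ₂ α ze' τ₃ →
        MArr τ₃ τ₄ τ₅ → Ana Γ e τ₄ →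
        SynActMin Γ (.apL ze e) τ₁ α (.apL ze' e) τ₅
    | zipApAna {Γ : Ctx} {ze ze' : ZExp} {e : HExp} {τ₁ τ₂ τ₃ τ₄ : HTyp} {α : HAction} :
        Syn Γ e τ₂ → MArr τ₂ τ₃ τ₄ → AnaActMin Γ ze τ₃ α ze' →
        SynActMin Γ (.apR e ze) τ₁ α (.apR e ze') τ₄
    | zipPlus1 {Γ : Ctx} {ze ze' : ZExp} {e : HExp} {α : HAction} :
        AnaActMin Γ ze .num α ze' →
        SynActMin Γ (.plusL ze e) .num α (.plusL ze' e) .num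
    | zipPlus2 {Γ : Ctx} {ze ze' : ZExp} {e : HExp} {α : HAction} :
        AnaActMin Γ ze .num α ze' →
        SynActMin Γ (.plusR e ze) .num α (.plusR e ze') .num
    | zipHole {Γ : Ctx} {ze ze' : ZExp} {τ τ' : HTyp} {α : HAction} :
        Syn Γ ze.erase τ → SynActMin Γ ze τ α ze' τ' →
        SynActMin Γ (.nehole ze) .hole α (.nehole ze') .hole

  /-- Subsumption-minimal derivations of the analytic action judgement:
  subsumption is only used when no other analytic action rule can conclude a
  judgement with the same context, Z-expression, action, and type. -/
  inductive AnaActMin : Ctx → ZExp → HTyp → HAction → ZExp → Prop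
    | subsume {Γ : Ctx} {ze ze' : ZExp} {τ τ' τ'' : HTyp} {α : HAction} :
        (∀ ze'' : ZExp, ¬ AnaActNonSub Γ ze τ α ze'') →
        Syn Γ ze.erase τ' → SynActMin Γ ze τ' α ze' τ'' → Consistent τ τ'' →
        AnaActMin Γ ze τ α ze'
    | move {Γ : Ctx} {ze ze' : ZExp} {τ : HTyp} {δ : Dir} :
        EMove ze δ ze' → AnaActMin Γ ze τ (.move δ) ze'
    | del {Γ : Ctx} {e : HExp} {τ : HTyp} :
        AnaActMin Γ (.cursor e) τ .del (.cursor .hole)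
    | conAsc {Γ : Ctx} {e : HExp} {τ : HTyp} :
        AnaActMin Γ (.cursor e) τ (.construct .asc) (.ascR e (.cursor τ))
    | conVar {Γ : Ctx} {x : String} {τ τ' : HTyp} :
        Γ x = some τ' → Inconsistent τ τ' →
        AnaActMin Γ (.cursor .hole) τ (.construct (.var x)) (.nehole (.cursor (.var x)))
    | conLam1 {Γ : Ctx} {x : String} {τ τ₁ τ₂ : HTyp} :
        MArr τ τ₁ τ₂ →
        AnaActMin Γ (.cursor .hole) τ (.construct (.lam x)) (.lam x (.cursor .hole))
    | conLam2 {Γ : Ctx} {x : String} {τ : HTyp} :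
        Inconsistent τ (.arr .hole .hole) →
        AnaActMin Γ (.cursor .hole) τ (.construct (.lam x))
          (.nehole (.ascR (.lam x .hole) (.arrL (.cursor .hole) .hole)))
    | conLit {Γ : Ctx} {n : Nat} {τ : HTyp} :
        Inconsistent τ .num →
        AnaActMin Γ (.cursor .hole) τ (.construct (.lit n)) (.nehole (.cursor (.lit n)))
    | finish {Γ : Ctx} {e : HExp} {τ : HTyp} :
        Ana Γ e τ →
        AnaActMin Γ (.cursor (.nehole e)) τ .finish (.cursor e)
    | zipLam {Γ : Ctx} {x : String} {ze ze' : ZExp} {τ τ₁ τ₂ : HTyp} {α : HAction} :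
        MArr τ τ₁ τ₂ → AnaActMin (Γ.extend x τ₁) ze τ₂ α ze' →
        AnaActMin Γ (.lam x ze) τ α (.lam x ze')
end

/-! ### Auxiliary lemmas -/

theorem incon_con : ∀ {a b : HTyp}, Inconsistent a b → Consistent a b → False := by
  intro a b h
  induction h with
  | numArr => intro hc; cases hc
  | arrNum => intro hc; cases hc
  | arr1 h ih =>
    intro hc
    cases hc with
    | refl => exact ih (.refl _)
    | arr h1 h2 => exact ih h1
  | arr2 h ih =>
    intro hc
    cases hc with
    | refl => exact ih (.refl _)
    | arr h1 h2 => exact ih h2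

theorem mArr_det {τ a b a' b' : HTyp} (h1 : MArr τ a b) (h2 : MArr τ a' b') :
    a = a' ∧ b = b' := by
  cases h1 <;> cases h2 <;> exact ⟨rfl, rfl⟩

theorem mArr_con {τ a b : HTyp} (h : MArr τ a b) : Consistent τ (.arr .hole .hole) := by
  cases h with
  | hole => exact .holeL _
  | arr => exact .arr (.holeR _) (.holeR _)

theorem tact_move_erase' : ∀ {zt α zt'}, TAct zt α zt' → ∀ δ, α = .move δ →
    zt'.erase = zt.erase := by
  intro zt α zt' h
  induction h with
  | arrChild1 => intros; rfl
  | arrChild2 => intros; rfl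
  | arrParent1 => intros; rfl
  | arrParent2 => intros; rfl
  | del => intro δ h; cases h
  | conArrow => intro δ h; cases h
  | conNum => intro δ h; cases h
  | zip1 h ih => intro δ hδ; simp [ZTyp.erase, ih δ hδ]
  | zip2 h ih => intro δ hδ; simp [ZTyp.erase, ih δ hδ]

theorem tact_move_erase {zt zt' : ZTyp} {δ : Dir} (h : TAct zt (.move δ) zt') :
    zt'.erase = zt.erase := tact_move_erase' h δ rfl

theorem tact_no_parent {τ : HTyp} {zt : ZTyp} (h : TAct (.cursor τ) (.move .parent) zt) :
    False := by cases h

theorem tact_det : ∀ {zt α zt1 zt2}, TAct zt α zt1 → TAct zt α zt2 → zt1 = zt2 := by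
  intro zt α zt1 zt2 h1
  induction h1 generalizing zt2 with
  | arrChild1 => intro h2; cases h2; rfl
  | arrChild2 => intro h2; cases h2; rfl
  | arrParent1 =>
    intro h2
    cases h2 with
    | arrParent1 => rfl
    | zip1 h => exact absurd h tact_no_parent
  | arrParent2 =>
    intro h2
    cases h2 with
    | arrParent2 => rfl
    | zip2 h => exact absurd h tact_no_parent
  | del => intro h2; cases h2; rfl
  | conArrow => intro h2; cases h2; rfl
  | conNum => intro h2; cases h2; rfl
  | zip1 h ih =>
    intro h2
    cases h2 with
    | arrParent1 => exact absurd h tact_no_parent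
    | zip1 h' => rw [ih h']
  | zip2 h ih =>
    intro h2
    cases h2 with
    | arrParent2 => exact absurd h tact_no_parent
    | zip2 h' => rw [ih h']

theorem emove_no_parent {e : HExp} {ze : ZExp} (h : EMove (.cursor e) .parent ze) :
    False := by cases h

theorem emove_det : ∀ {ze δ z1 z2}, EMove ze δ z1 → EMove ze δ z2 → z1 = z2 := by
  intro ze δ z1 z2 h1
  induction h1 generalizing z2 with
  | ascChild1 => intro h2; cases h2; rfl
  | ascChild2 => intro h2; cases h2; rfl
  | ascParent1 =>
    intro h2
    cases h2 with
    | ascParent1 => rfl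
    | ascZip1 h => exact absurd h emove_no_parent
  | ascParent2 =>
    intro h2
    cases h2 with
    | ascParent2 => rfl
    | ascZip2 h => exact absurd h tact_no_parent
  | lamChild1 => intro h2; cases h2; rfl
  | lamParent =>
    intro h2
    cases h2 with
    | lamParent => rfl
    | lamZip h => exact absurd h emove_no_parent
  | plusChild1 => intro h2; cases h2; rfl
  | plusChild2 => intro h2; cases h2; rfl
  | plusParent1 =>
    intro h2
    cases h2 with
    | plusParent1 => rfl
    | plusZip1 h => exact absurd h emove_no_parent
  | plusParent2 =>
    intro h2
    cases h2 with
    | plusParent2 => rfl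
    | plusZip2 h => exact absurd h emove_no_parent
  | apChild1 => intro h2; cases h2; rfl
  | apChild2 => intro h2; cases h2; rfl
  | apParent1 =>
    intro h2
    cases h2 with
    | apParent1 => rfl
    | apZip1 h => exact absurd h emove_no_parent
  | apParent2 =>
    intro h2
    cases h2 with
    | apParent2 => rfl
    | apZip2 h => exact absurd h emove_no_parent
  | neholeChild1 => intro h2; cases h2; rfl
  | neholeParent =>
    intro h2
    cases h2 with
    | neholeParent => rfl
    | neholeZip h => exact absurd h emove_no_parent
  | ascZip1 h ih =>
    intro h2
    cases h2 with
    | ascParent1 => exact absurd h emove_no_parent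
    | ascZip1 h' => rw [ih h']
  | ascZip2 h =>
    intro h2
    cases h2 with
    | ascParent2 => exact absurd h tact_no_parent
    | ascZip2 h' => rw [tact_det h h']
  | lamZip h ih =>
    intro h2
    cases h2 with
    | lamParent => exact absurd h emove_no_parent
    | lamZip h' => rw [ih h']
  | apZip1 h ih =>
    intro h2
    cases h2 with
    | apParent1 => exact absurd h emove_no_parent
    | apZip1 h' => rw [ih h']
  | apZip2 h ih =>
    intro h2
    cases h2 with
    | apParent2 => exact absurd h emove_no_parent
    | apZip2 h' => rw [ih h']
  | plusZip1 h ih =>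
    intro h2
    cases h2 with
    | plusParent1 => exact absurd h emove_no_parent
    | plusZip1 h' => rw [ih h']
  | plusZip2 h ih =>
    intro h2
    cases h2 with
    | plusParent2 => exact absurd h emove_no_parent
    | plusZip2 h' => rw [ih h']
  | neholeZip h ih =>
    intro h2
    cases h2 with
    | neholeParent => exact absurd h emove_no_parent
    | neholeZip h' => rw [ih h']

theorem syn_det : ∀ (e : HExp) {Γ : Ctx} {τ1 τ2 : HTyp},
    Syn Γ e τ1 → Syn Γ e τ2 → τ1 = τ2 := by
  intro e
  induction e with
  | var x =>
    intro Γ τ1 τ2 h1 h2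
    cases h1 with | var hx1 => cases h2 with | var hx2 =>
      rw [hx1] at hx2; exact (Option.some.inj hx2)
  | lam x e ih => intro Γ τ1 τ2 h1 h2; cases h1
  | ap e1 e2 ih1 ih2 =>
    intro Γ τ1 τ2 h1 h2
    cases h1 with | ap hs1 hm1 ha1 => cases h2 with | ap hs2 hm2 ha2 =>
      cases ih1 hs1 hs2
      exact (mArr_det hm1 hm2).2
  | lit n => intro Γ τ1 τ2 h1 h2; cases h1; cases h2; rfl
  | plus e1 e2 ih1 ih2 => intro Γ τ1 τ2 h1 h2; cases h1; cases h2; rfl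
  | asc e τ ih => intro Γ τ1 τ2 h1 h2; cases h1; cases h2; rfl
  | hole => intro Γ τ1 τ2 h1 h2; cases h1; cases h2; rfl
  | nehole e ih => intro Γ τ1 τ2 h1 h2; cases h1; cases h2; rfl

/-- Subsumption-minimal move actions are exactly the movements. -/
theorem min_move : ∀ ze : ZExp,
    (∀ {Γ τ δ ze' τ'}, SynActMin Γ ze τ (.move δ) ze' τ' → EMove ze δ ze') ∧
    (∀ {Γ τ δ ze'}, AnaActMin Γ ze τ (.move δ) ze' → EMove ze δ ze') := by
  intro ze
  induction ze with
  | cursor e =>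
    have hs : ∀ {Γ : Ctx} {τ δ ze' τ'}, SynActMin Γ (.cursor e) τ (.move δ) ze' τ' →
        EMove (.cursor e) δ ze' := by
      intro Γ τ δ ze' τ' h
      cases h with | move h => exact h
    refine ⟨hs, ?_⟩
    intro Γ τ δ ze' h
    cases h with
    | subsume hno hsyn hmin hcon => exact hs hmin
    | move h => exact h
  | lam x ze0 ih =>
    have hs : ∀ {Γ : Ctx} {τ δ ze' τ'}, SynActMin Γ (.lam x ze0) τ (.move δ) ze' τ' →
        EMove (.lam x ze0) δ ze' := by
      intro Γ τ δ ze' τ' h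
      cases h with | move h => exact h
    refine ⟨hs, ?_⟩
    intro Γ τ δ ze' h
    cases h with
    | subsume hno hsyn hmin hcon => exact hs hmin
    | move h => exact h
    | zipLam hm h => exact .lamZip (ih.2 h)
  | apL ze0 e ih =>
    have hs : ∀ {Γ : Ctx} {τ δ ze' τ'}, SynActMin Γ (.apL ze0 e) τ (.move δ) ze' τ' →
        EMove (.apL ze0 e) δ ze' := by
      intro Γ τ δ ze' τ' h
      cases h with
      | move h => exact h
      | zipApArr hsy hmin hm ha => exact .apZip1 (ih.1 hmin)
    refine ⟨hs, ?_⟩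
    intro Γ τ δ ze' h
    cases h with
    | subsume hno hsyn hmin hcon => exact hs hmin
    | move h => exact h
  | apR e ze0 ih =>
    have hs : ∀ {Γ : Ctx} {τ δ ze' τ'}, SynActMin Γ (.apR e ze0) τ (.move δ) ze' τ' →
        EMove (.apR e ze0) δ ze' := by
      intro Γ τ δ ze' τ' h
      cases h with
      | move h => exact h
      | zipApAna hsy hm hmin => exact .apZip2 (ih.2 hmin)
    refine ⟨hs, ?_⟩
    intro Γ τ δ ze' h
    cases h with
    | subsume hno hsyn hmin hcon => exact hs hmin
    | move h => exact h
  | plusL ze0 e ih =>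
    have hs : ∀ {Γ : Ctx} {τ δ ze' τ'}, SynActMin Γ (.plusL ze0 e) τ (.move δ) ze' τ' →
        EMove (.plusL ze0 e) δ ze' := by
      intro Γ τ δ ze' τ' h
      cases h with
      | move h => exact h
      | zipPlus1 hmin => exact .plusZip1 (ih.2 hmin)
    refine ⟨hs, ?_⟩
    intro Γ τ δ ze' h
    cases h with
    | subsume hno hsyn hmin hcon => exact hs hmin
    | move h => exact h
  | plusR e ze0 ih =>
    have hs : ∀ {Γ : Ctx} {τ δ ze' τ'}, SynActMin Γ (.plusR e ze0) τ (.move δ) ze' τ' →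
        EMove (.plusR e ze0) δ ze' := by
      intro Γ τ δ ze' τ' h
      cases h with
      | move h => exact h
      | zipPlus2 hmin => exact .plusZip2 (ih.2 hmin)
    refine ⟨hs, ?_⟩
    intro Γ τ δ ze' h
    cases h with
    | subsume hno hsyn hmin hcon => exact hs hmin
    | move h => exact h
  | ascL ze0 τ0 ih =>
    have hs : ∀ {Γ : Ctx} {τ δ ze' τ'}, SynActMin Γ (.ascL ze0 τ0) τ (.move δ) ze' τ' →
        EMove (.ascL ze0 τ0) δ ze' := by
      intro Γ τ δ ze' τ' h
      cases h with
      | move h => exact h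
      | zipAsc1 hmin => exact .ascZip1 (ih.2 hmin)
    refine ⟨hs, ?_⟩
    intro Γ τ δ ze' h
    cases h with
    | subsume hno hsyn hmin hcon => exact hs hmin
    | move h => exact h
  | ascR e zt =>
    have hs : ∀ {Γ : Ctx} {τ δ ze' τ'}, SynActMin Γ (.ascR e zt) τ (.move δ) ze' τ' →
        EMove (.ascR e zt) δ ze' := by
      intro Γ τ δ ze' τ' h
      cases h with
      | move h => exact h
      | zipAsc2 ht ha => exact .ascZip2 ht
    refine ⟨hs, ?_⟩
    intro Γ τ δ ze' h
    cases h with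
    | subsume hno hsyn hmin hcon => exact hs hmin
    | move h => exact h
  | nehole ze0 ih =>
    have hs : ∀ {Γ : Ctx} {τ δ ze' τ'}, SynActMin Γ (.nehole ze0) τ (.move δ) ze' τ' →
        EMove (.nehole ze0) δ ze' := by
      intro Γ τ δ ze' τ' h
      cases h with
      | move h => exact h
      | zipHole hsy hmin => exact .neholeZip (ih.1 hmin)
    refine ⟨hs, ?_⟩
    intro Γ τ δ ze' h
    cases h with
    | subsume hno hsyn hmin hcon => exact hs hmin
    | move h => exact h

/-- Well-typed subsumption-minimal move actions preserve the synthesized type. -/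
theorem move_preserve : ∀ (ze : ZExp) {Γ : Ctx} {τ δ ze' τ'},
    Syn Γ ze.erase τ → SynActMin Γ ze τ (.move δ) ze' τ' → τ' = τ := by
  intro ze
  induction ze with
  | cursor e =>
    intro Γ τ δ ze' τ' hty h
    cases h with | move h => rfl
  | lam x ze0 ih =>
    intro Γ τ δ ze' τ' hty h
    cases h with | move h => rfl
  | apL ze0 e ih =>
    intro Γ τ δ ze' τ' hty h
    cases h with
    | move h => rfl
    | zipApArr hsy hmin hm ha =>
      cases hty with
      | ap hs' hm' ha' =>
        cases syn_det _ hsy hs'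
        cases ih hsy hmin
        exact (mArr_det hm hm').2
  | apR e ze0 ih =>
    intro Γ τ δ ze' τ' hty h
    cases h with
    | move h => rfl
    | zipApAna hsy hm hmin =>
      cases hty with
      | ap hs' hm' ha' =>
        cases syn_det _ hsy hs'
        exact (mArr_det hm hm').2
  | plusL ze0 e ih =>
    intro Γ τ δ ze' τ' hty h
    cases h with
    | move h => rfl
    | zipPlus1 hmin => rfl
  | plusR e ze0 ih =>
    intro Γ τ δ ze' τ' hty h
    cases h with
    | move h => rfl
    | zipPlus2 hmin => rfl
  | ascL ze0 τ0 ih =>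
    intro Γ τ δ ze' τ' hty h
    cases h with
    | move h => rfl
    | zipAsc1 hmin => rfl
  | ascR e zt =>
    intro Γ τ δ ze' τ' hty h
    cases h with
    | move h => rfl
    | zipAsc2 ht ha => exact tact_move_erase ht
  | nehole ze0 ih =>
    intro Γ τ δ ze' τ' hty h
    cases h with
    | move h => rfl
    | zipHole hsy hmin => rfl

/-- The combined determinism statement, by structural induction on the Z-expression. -/
theorem main_det : ∀ ze : ZExp,
    (∀ {Γ : Ctx} {ze' ze'' : ZExp} {τ τ' τ'' : HTyp} {α : HAction},
      Syn Γ ze.erase τ →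
      SynActMin Γ ze τ α ze' τ' → SynActMin Γ ze τ α ze'' τ'' →
      ze' = ze'' ∧ τ' = τ'') ∧
    (∀ {Γ : Ctx} {ze' ze'' : ZExp} {τ : HTyp} {α : HAction},
      Ana Γ ze.erase τ →
      AnaActMin Γ ze τ α ze' → AnaActMin Γ ze τ α ze'' →
      ze' = ze'') := by
  intro ze
  induction ze with
  | cursor e =>
    have hs : ∀ {Γ : Ctx} {ze' ze'' : ZExp} {τ τ' τ'' : HTyp} {α : HAction},
        Syn Γ (ZExp.cursor e).erase τ →
        SynActMin Γ (.cursor e) τ α ze' τ' → SynActMin Γ (.cursor e) τ α ze'' τ'' →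
        ze' = ze'' ∧ τ' = τ'' := by
      intro Γ ze' ze'' τ τ' τ'' α hty h1 h2
      cases α with
      | move δ =>
        exact ⟨emove_det ((min_move _).1 h1) ((min_move _).1 h2),
          by rw [move_preserve _ hty h1, move_preserve _ hty h2]⟩
      | del => cases h1; cases h2; exact ⟨rfl, rfl⟩
      | finish =>
        cases h1 with | finish hsy1 =>
        cases h2 with | finish hsy2 =>
        exact ⟨rfl, syn_det _ hsy1 hsy2⟩
      | construct s =>
        cases h1 with
        | conAsc => cases h2; exact ⟨rfl, rfl⟩
        | conVar hx1 =>
          cases h2 with | conVar hx2 =>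
          rw [hx1] at hx2
          exact ⟨rfl, Option.some.inj hx2⟩
        | conLam => cases h2; exact ⟨rfl, rfl⟩
        | conApArr hm1 =>
          cases h2 with
          | conApArr hm2 => exact ⟨rfl, (mArr_det hm1 hm2).2⟩
          | conApOtw hin => exact (incon_con hin (mArr_con hm1)).elim
        | conApOtw hin =>
          cases h2 with
          | conApArr hm2 => exact (incon_con hin (mArr_con hm2)).elim
          | conApOtw hin2 => exact ⟨rfl, rfl⟩
        | conLit => cases h2; exact ⟨rfl, rfl⟩
        | conPlus1 hc1 =>
          cases h2 with
          | conPlus1 hc2 => exact ⟨rfl, rfl⟩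
          | conPlus2 hin => exact (incon_con hin hc1).elim
        | conPlus2 hin =>
          cases h2 with
          | conPlus1 hc2 => exact (incon_con hin hc2).elim
          | conPlus2 hin2 => exact ⟨rfl, rfl⟩
        | conNEHole => cases h2; exact ⟨rfl, rfl⟩
    refine ⟨hs, ?_⟩
    intro Γ ze' ze'' τ α hana h1 h2
    cases α with
    | move δ => exact emove_det ((min_move _).2 h1) ((min_move _).2 h2)
    | del =>
      cases h1 with
      | subsume hno1 hsy1 hmin1 hcon1 => exact (hno1 _ .del).elim
      | del =>
        cases h2 with
        | subsume hno2 hsy2 hmin2 hcon2 => exact (hno2 _ .del).elim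
        | del => rfl
    | finish =>
      cases h1 with
      | subsume hno1 hsy1 hmin1 hcon1 =>
        cases h2 with
        | subsume hno2 hsy2 hmin2 hcon2 =>
          cases syn_det _ hsy1 hsy2
          exact (hs hsy1 hmin1 hmin2).1
        | finish ha2 => exact (hno1 _ (.finish ha2)).elim
      | finish ha1 =>
        cases h2 with
        | subsume hno2 hsy2 hmin2 hcon2 => exact (hno2 _ (.finish ha1)).elim
        | finish ha2 => rfl
    | construct s =>
      cases h1 with
      | subsume hno1 hsy1 hmin1 hcon1 =>
        cases h2 with
        | subsume hno2 hsy2 hmin2 hcon2 =>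
          cases syn_det _ hsy1 hsy2
          exact (hs hsy1 hmin1 hmin2).1
        | conAsc => exact (hno1 _ .conAsc).elim
        | conVar hx hin => exact (hno1 _ (.conVar hx hin)).elim
        | conLam1 hm => exact (hno1 _ (.conLam1 hm)).elim
        | conLam2 hin => exact (hno1 _ (.conLam2 hin)).elim
        | conLit hin => exact (hno1 _ (.conLit hin)).elim
      | conAsc =>
        cases h2 with
        | subsume hno2 hsy2 hmin2 hcon2 => exact (hno2 _ .conAsc).elim
        | conAsc => rfl
      | conVar hx1 hin1 =>
        cases h2 with
        | subsume hno2 hsy2 hmin2 hcon2 => exact (hno2 _ (.conVar hx1 hin1)).elim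
        | conVar hx2 hin2 => rfl
      | conLam1 hm1 =>
        cases h2 with
        | subsume hno2 hsy2 hmin2 hcon2 => exact (hno2 _ (.conLam1 hm1)).elim
        | conLam1 hm2 => rfl
        | conLam2 hin2 => exact (incon_con hin2 (mArr_con hm1)).elim
      | conLam2 hin1 =>
        cases h2 with
        | subsume hno2 hsy2 hmin2 hcon2 => exact (hno2 _ (.conLam2 hin1)).elim
        | conLam1 hm2 => exact (incon_con hin1 (mArr_con hm2)).elim
        | conLam2 hin2 => rfl
      | conLit hin1 =>
        cases h2 with
        | subsume hno2 hsy2 hmin2 hcon2 => exact (hno2 _ (.conLit hin1)).elim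
        | conLit hin2 => rfl
  | lam x ze0 ih =>
    have hs : ∀ {Γ : Ctx} {ze' ze'' : ZExp} {τ τ' τ'' : HTyp} {α : HAction},
        Syn Γ (ZExp.lam x ze0).erase τ →
        SynActMin Γ (.lam x ze0) τ α ze' τ' → SynActMin Γ (.lam x ze0) τ α ze'' τ'' →
        ze' = ze'' ∧ τ' = τ'' := by
      intro Γ ze' ze'' τ τ' τ'' α hty h1 h2
      cases α with
      | move δ =>
        exact ⟨emove_det ((min_move _).1 h1) ((min_move _).1 h2),
          by rw [move_preserve _ hty h1, move_preserve _ hty h2]⟩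
      | del => cases h1
      | finish => cases h1
      | construct s => cases h1
    refine ⟨hs, ?_⟩
    intro Γ ze' ze'' τ α hana h1 h2
    cases α with
    | move δ => exact emove_det ((min_move _).2 h1) ((min_move _).2 h2)
    | del =>
      cases h1 with
      | subsume hno1 hsy1 hmin1 hcon1 => cases hsy1
      | zipLam hm1 hmin1 =>
        cases h2 with
        | subsume hno2 hsy2 hmin2 hcon2 => cases hsy2
        | zipLam hm2 hmin2 =>
          cases hana with
          | lam hma hana0 =>
            obtain ⟨rfl, rfl⟩ := mArr_det hm1 hma
            obtain ⟨rfl, rfl⟩ := mArr_det hm2 hma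
            rw [ih.2 hana0 hmin1 hmin2]
          | subsume hsy _ => cases hsy
    | finish =>
      cases h1 with
      | subsume hno1 hsy1 hmin1 hcon1 => cases hsy1
      | zipLam hm1 hmin1 =>
        cases h2 with
        | subsume hno2 hsy2 hmin2 hcon2 => cases hsy2
        | zipLam hm2 hmin2 =>
          cases hana with
          | lam hma hana0 =>
            obtain ⟨rfl, rfl⟩ := mArr_det hm1 hma
            obtain ⟨rfl, rfl⟩ := mArr_det hm2 hma
            rw [ih.2 hana0 hmin1 hmin2]
          | subsume hsy _ => cases hsy
    | construct s =>
      cases h1 with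
      | subsume hno1 hsy1 hmin1 hcon1 => cases hsy1
      | zipLam hm1 hmin1 =>
        cases h2 with
        | subsume hno2 hsy2 hmin2 hcon2 => cases hsy2
        | zipLam hm2 hmin2 =>
          cases hana with
          | lam hma hana0 =>
            obtain ⟨rfl, rfl⟩ := mArr_det hm1 hma
            obtain ⟨rfl, rfl⟩ := mArr_det hm2 hma
            rw [ih.2 hana0 hmin1 hmin2]
          | subsume hsy _ => cases hsy
  | ascL ze0 τ0 ih =>
    have hs : ∀ {Γ : Ctx} {ze' ze'' : ZExp} {τ τ' τ'' : HTyp} {α : HAction},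
        Syn Γ (ZExp.ascL ze0 τ0).erase τ →
        SynActMin Γ (.ascL ze0 τ0) τ α ze' τ' → SynActMin Γ (.ascL ze0 τ0) τ α ze'' τ'' →
        ze' = ze'' ∧ τ' = τ'' := by
      intro Γ ze' ze'' τ τ' τ'' α hty h1 h2
      cases α
      case move δ =>
        exact ⟨emove_det ((min_move _).1 h1) ((min_move _).1 h2),
          by rw [move_preserve _ hty h1, move_preserve _ hty h2]⟩
      all_goals
        cases h1 with
        | zipAsc1 hmin1 =>
          cases h2 with
          | zipAsc1 hmin2 =>
            cases hty with
            | asc ha => exact ⟨by rw [ih.2 ha hmin1 hmin2], rfl⟩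
    refine ⟨hs, ?_⟩
    intro Γ ze' ze'' τ α hana h1 h2
    cases α
    case move δ => exact emove_det ((min_move _).2 h1) ((min_move _).2 h2)
    all_goals
      cases h1 with
      | subsume hno1 hsy1 hmin1 hcon1 =>
        cases h2 with
        | subsume hno2 hsy2 hmin2 hcon2 =>
          cases syn_det _ hsy1 hsy2
          exact (hs hsy1 hmin1 hmin2).1
  | ascR e zt =>
    have hs : ∀ {Γ : Ctx} {ze' ze'' : ZExp} {τ τ' τ'' : HTyp} {α : HAction},
        Syn Γ (ZExp.ascR e zt).erase τ →
        SynActMin Γ (.ascR e zt) τ α ze' τ' → SynActMin Γ (.ascR e zt) τ α ze'' τ'' →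
        ze' = ze'' ∧ τ' = τ'' := by
      intro Γ ze' ze'' τ τ' τ'' α hty h1 h2
      cases α
      case move δ =>
        exact ⟨emove_det ((min_move _).1 h1) ((min_move _).1 h2),
          by rw [move_preserve _ hty h1, move_preserve _ hty h2]⟩
      all_goals
        cases h1 with
        | zipAsc2 ht1 ha1 =>
          cases h2 with
          | zipAsc2 ht2 ha2 =>
            cases tact_det ht1 ht2
            exact ⟨rfl, rfl⟩
    refine ⟨hs, ?_⟩
    intro Γ ze' ze'' τ α hana h1 h2
    cases α
    case move δ => exact emove_det ((min_move _).2 h1) ((min_move _).2 h2)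
    all_goals
      cases h1 with
      | subsume hno1 hsy1 hmin1 hcon1 =>
        cases h2 with
        | subsume hno2 hsy2 hmin2 hcon2 =>
          cases syn_det _ hsy1 hsy2
          exact (hs hsy1 hmin1 hmin2).1
  | apL ze0 e ih =>
    have hs : ∀ {Γ : Ctx} {ze' ze'' : ZExp} {τ τ' τ'' : HTyp} {α : HAction},
        Syn Γ (ZExp.apL ze0 e).erase τ →
        SynActMin Γ (.apL ze0 e) τ α ze' τ' → SynActMin Γ (.apL ze0 e) τ α ze'' τ'' →
        ze' = ze'' ∧ τ' = τ'' := by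
      intro Γ ze' ze'' τ τ' τ'' α hty h1 h2
      cases α
      case move δ =>
        exact ⟨emove_det ((min_move _).1 h1) ((min_move _).1 h2),
          by rw [move_preserve _ hty h1, move_preserve _ hty h2]⟩
      all_goals
        cases h1 with
        | zipApArr hsy1 hmin1 hm1 ha1 =>
          cases h2 with
          | zipApArr hsy2 hmin2 hm2 ha2 =>
            cases syn_det _ hsy1 hsy2
            obtain ⟨rfl, rfl⟩ := ih.1 hsy1 hmin1 hmin2
            obtain ⟨rfl, rfl⟩ := mArr_det hm1 hm2
            exact ⟨rfl, rfl⟩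
    refine ⟨hs, ?_⟩
    intro Γ ze' ze'' τ α hana h1 h2
    cases α
    case move δ => exact emove_det ((min_move _).2 h1) ((min_move _).2 h2)
    all_goals
      cases h1 with
      | subsume hno1 hsy1 hmin1 hcon1 =>
        cases h2 with
        | subsume hno2 hsy2 hmin2 hcon2 =>
          cases syn_det _ hsy1 hsy2
          exact (hs hsy1 hmin1 hmin2).1
  | apR e ze0 ih =>
    have hs : ∀ {Γ : Ctx} {ze' ze'' : ZExp} {τ τ' τ'' : HTyp} {α : HAction},
        Syn Γ (ZExp.apR e ze0).erase τ →
        SynActMin Γ (.apR e ze0) τ α ze' τ' → SynActMin Γ (.apR e ze0) τ α ze'' τ'' →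
        ze' = ze'' ∧ τ' = τ'' := by
      intro Γ ze' ze'' τ τ' τ'' α hty h1 h2
      cases α
      case move δ =>
        exact ⟨emove_det ((min_move _).1 h1) ((min_move _).1 h2),
          by rw [move_preserve _ hty h1, move_preserve _ hty h2]⟩
      all_goals
        cases h1 with
        | zipApAna hsy1 hm1 hmin1 =>
          cases h2 with
          | zipApAna hsy2 hm2 hmin2 =>
            cases syn_det _ hsy1 hsy2
            obtain ⟨rfl, rfl⟩ := mArr_det hm1 hm2
            cases hty with
            | ap hsy' hm' ha' =>
              cases syn_det _ hsy1 hsy'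
              obtain ⟨rfl, rfl⟩ := mArr_det hm1 hm'
              exact ⟨by rw [ih.2 ha' hmin1 hmin2], rfl⟩
    refine ⟨hs, ?_⟩
    intro Γ ze' ze'' τ α hana h1 h2
    cases α
    case move δ => exact emove_det ((min_move _).2 h1) ((min_move _).2 h2)
    all_goals
      cases h1 with
      | subsume hno1 hsy1 hmin1 hcon1 =>
        cases h2 with
        | subsume hno2 hsy2 hmin2 hcon2 =>
          cases syn_det _ hsy1 hsy2
          exact (hs hsy1 hmin1 hmin2).1
  | plusL ze0 e ih =>
    have hs : ∀ {Γ : Ctx} {ze' ze'' : ZExp} {τ τ' τ'' : HTyp} {α : HAction},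
        Syn Γ (ZExp.plusL ze0 e).erase τ →
        SynActMin Γ (.plusL ze0 e) τ α ze' τ' → SynActMin Γ (.plusL ze0 e) τ α ze'' τ'' →
        ze' = ze'' ∧ τ' = τ'' := by
      intro Γ ze' ze'' τ τ' τ'' α hty h1 h2
      cases α
      case move δ =>
        exact ⟨emove_det ((min_move _).1 h1) ((min_move _).1 h2),
          by rw [move_preserve _ hty h1, move_preserve _ hty h2]⟩
      all_goals
        cases h1 with
        | zipPlus1 hmin1 =>
          cases h2 with
          | zipPlus1 hmin2 =>
            cases hty with
            | plus ha1 ha2 => exact ⟨by rw [ih.2 ha1 hmin1 hmin2], rfl⟩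
    refine ⟨hs, ?_⟩
    intro Γ ze' ze'' τ α hana h1 h2
    cases α
    case move δ => exact emove_det ((min_move _).2 h1) ((min_move _).2 h2)
    all_goals
      cases h1 with
      | subsume hno1 hsy1 hmin1 hcon1 =>
        cases h2 with
        | subsume hno2 hsy2 hmin2 hcon2 =>
          cases syn_det _ hsy1 hsy2
          exact (hs hsy1 hmin1 hmin2).1
  | plusR e ze0 ih =>
    have hs : ∀ {Γ : Ctx} {ze' ze'' : ZExp} {τ τ' τ'' : HTyp} {α : HAction},
        Syn Γ (ZExp.plusR e ze0).erase τ →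
        SynActMin Γ (.plusR e ze0) τ α ze' τ' → SynActMin Γ (.plusR e ze0) τ α ze'' τ'' →
        ze' = ze'' ∧ τ' = τ'' := by
      intro Γ ze' ze'' τ τ' τ'' α hty h1 h2
      cases α
      case move δ =>
        exact ⟨emove_det ((min_move _).1 h1) ((min_move _).1 h2),
          by rw [move_preserve _ hty h1, move_preserve _ hty h2]⟩
      all_goals
        cases h1 with
        | zipPlus2 hmin1 =>
          cases h2 with
          | zipPlus2 hmin2 =>
            cases hty with
            | plus ha1 ha2 => exact ⟨by rw [ih.2 ha2 hmin1 hmin2], rfl⟩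
    refine ⟨hs, ?_⟩
    intro Γ ze' ze'' τ α hana h1 h2
    cases α
    case move δ => exact emove_det ((min_move _).2 h1) ((min_move _).2 h2)
    all_goals
      cases h1 with
      | subsume hno1 hsy1 hmin1 hcon1 =>
        cases h2 with
        | subsume hno2 hsy2 hmin2 hcon2 =>
          cases syn_det _ hsy1 hsy2
          exact (hs hsy1 hmin1 hmin2).1
  | nehole ze0 ih =>
    have hs : ∀ {Γ : Ctx} {ze' ze'' : ZExp} {τ τ' τ'' : HTyp} {α : HAction},
        Syn Γ (ZExp.nehole ze0).erase τ →
        SynActMin Γ (.nehole ze0) τ α ze' τ' → SynActMin Γ (.nehole ze0) τ α ze'' τ'' →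
        ze' = ze'' ∧ τ' = τ'' := by
      intro Γ ze' ze'' τ τ' τ'' α hty h1 h2
      cases α
      case move δ =>
        exact ⟨emove_det ((min_move _).1 h1) ((min_move _).1 h2),
          by rw [move_preserve _ hty h1, move_preserve _ hty h2]⟩
      all_goals
        cases h1 with
        | zipHole hsy1 hmin1 =>
          cases h2 with
          | zipHole hsy2 hmin2 =>
            cases syn_det _ hsy1 hsy2
            exact ⟨by rw [(ih.1 hsy1 hmin1 hmin2).1], rfl⟩
    refine ⟨hs, ?_⟩
    intro Γ ze' ze'' τ α hana h1 h2
    cases α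
    case move δ => exact emove_det ((min_move _).2 h1) ((min_move _).2 h2)
    all_goals
      cases h1 with
      | subsume hno1 hsy1 hmin1 hcon1 =>
        cases h2 with
        | subsume hno2 hsy2 hmin2 hcon2 =>
          cases syn_det _ hsy1 hsy2
          exact (hs hsy1 hmin1 hmin2).1

/-- Expression Action Determinism for subsumption-minimal derivations:
(1) the synthetic clause and (2) the analytic clause. -/
theorem expression_action_determinism :
    (∀ {Γ : Ctx} {ze ze' ze'' : ZExp} {τ τ' τ'' : HTyp} {α : HAction},
      Syn Γ ze.erase τ →
      SynActMin Γ ze τ α ze' τ' → SynActMin Γ ze τ α ze'' τ'' →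
      ze' = ze'' ∧ τ' = τ'') ∧
    (∀ {Γ : Ctx} {ze ze' ze'' : ZExp} {τ : HTyp} {α : HAction},
      Ana Γ ze.erase τ →
      AnaActMin Γ ze τ α ze' → AnaActMin Γ ze τ α ze'' →
      ze' = ze'') :=
  ⟨fun h h1 h2 => (main_det _).1 h h1 h2, fun h h1 h2 => (main_det _).2 h h1 h2⟩
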